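/- arXiv:2411.17739 — 2 statements merged into one kernel-verified Lean document; each statement's English description precedes it below -/
import Mathlib

section
/- The relation ≤ on words over {1,2}, defined by: x ≤ y if and only if, after deleting the longest common suffix of x and y, the number of 2's remaining in y is at least the total number of digits remaining in x, is a partial order (reflexive, antisymmetric, and transitive). -/
inductive YFDigit : Type
  | one : YFDigit
  | two : YFDigit
  deriving DecidableEq, Repr

abbrev YFWord := List YFDigit

namespace YFWord

/-- value of a digit -/
def digitVal : YFDigit → ℕ
  | .one => 1
  | .two => 2

/-- digit sum of a word -/
def dsum (v : YFWord) : ℕ := (v.map digitVal).sum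

/-- number of 2's in a word -/
def twos (v : YFWord) : ℕ := v.count YFDigit.two

/-- longest common prefix of two lists -/
def commonPrefix : YFWord → YFWord → YFWord
  | a :: x, b :: y => if a = b then a :: commonPrefix x y else []
  | _, _ => []

/-- longest common suffix -/
def lcs (x y : YFWord) : YFWord := (commonPrefix x.reverse y.reverse).reverse

/-- the prefix of `x` remaining after deleting the longest common suffix of `x` and `y` -/
def rem (x y : YFWord) : YFWord := x.take (x.length - (lcs x y).length)

/-- the Young–Fibonacci order: x ≤ y iff, after removing the longest common suffix,
the remaining prefix of `y` has at least as many 2's as the remaining prefix of `x` has digits -/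
def yfLE (x y : YFWord) : Prop := (rem x y).length ≤ twos (rem y x)

/-- strict Young–Fibonacci order -/
def yfLT (x y : YFWord) : Prop := yfLE x y ∧ ¬ yfLE y x

/-- `y` covers `x` in the Young–Fibonacci order -/
def covers (x y : YFWord) : Prop := yfLT x y ∧ ∀ z, ¬ (yfLT x z ∧ yfLT z y)

end YFWord

/-!
Reading words backwards turns the longest common suffix into the longest common prefix, of
length `c` say, and `x ≤ y` becomes `|x| - c ≤ twos (y.drop c)` for the reversed words.
Antisymmetry: the two inequalities force both remainders to consist of 2's only and to have
equal length, so a nonempty remainder would extend the common prefix. Transitivity: the common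
prefix of `x` and `z` is at least as long as the shorter of those of `x, y` and of `y, z`, and
moving the cut point by `k` positions changes `twos` of the remainder by at most `k`.
-/

namespace YFWord

theorem commonPrefix_comm : ∀ A B : YFWord, commonPrefix A B = commonPrefix B A
  | a :: x, b :: y => by
    by_cases h : a = b
    · subst h
      simp [commonPrefix, commonPrefix_comm x y]
    · simp [commonPrefix, h, Ne.symm h]
  | [], [] | [], _ :: _ | _ :: _, [] => rfl

theorem commonPrefix_self : ∀ A : YFWord, commonPrefix A A = A
  | [] => rfl
  | a :: x => by simp [commonPrefix, commonPrefix_self x]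

theorem commonPrefix_prefix_left : ∀ A B : YFWord, commonPrefix A B <+: A
  | a :: x, b :: y => by
    by_cases h : a = b
    · simpa [commonPrefix, h] using commonPrefix_prefix_left x y
    · simp [commonPrefix, h]
  | [], [] | [], _ :: _ | _ :: _, [] => List.nil_prefix

theorem commonPrefix_prefix_right (A B : YFWord) : commonPrefix A B <+: B :=
  commonPrefix_comm B A ▸ commonPrefix_prefix_left B A

theorem length_commonPrefix_le_left (A B : YFWord) : (commonPrefix A B).length ≤ A.length :=
  (commonPrefix_prefix_left A B).length_le

theorem length_commonPrefix_le_right (A B : YFWord) : (commonPrefix A B).length ≤ B.length :=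
  (commonPrefix_prefix_right A B).length_le

theorem take_length_commonPrefix (A B : YFWord) :
    A.take (commonPrefix A B).length = B.take (commonPrefix A B).length :=
  (List.prefix_iff_eq_take.mp (commonPrefix_prefix_left A B)).symm.trans
    (List.prefix_iff_eq_take.mp (commonPrefix_prefix_right A B))

theorem le_length_commonPrefix {A B : YFWord} {n : ℕ} (h : n ≤ A.length)
    (he : A.take n = B.take n) : n ≤ (commonPrefix A B).length := by
  induction A generalizing B n with
  | nil => simp_all
  | cons a x ih =>
    cases n with
    | zero => exact Nat.zero_le _
    | succ n =>
      cases B with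
      | nil => simp at he
      | cons b y =>
        simp only [List.take_succ_cons, List.cons.injEq] at he
        obtain ⟨rfl, he⟩ := he
        simpa [commonPrefix] using ih (by simpa using h) he

theorem take_eq_take_of_le_length_commonPrefix {A B : YFWord} {n : ℕ}
    (h : n ≤ (commonPrefix A B).length) : A.take n = B.take n := by
  rw [← min_eq_left h, ← List.take_take, take_length_commonPrefix, List.take_take]

theorem getElem?_length_commonPrefix_ne {A B : YFWord} (h : (commonPrefix A B).length < A.length) :
    A[(commonPrefix A B).length]? ≠ B[(commonPrefix A B).length]? := by
  intro he
  have := le_length_commonPrefix (B := B) (n := (commonPrefix A B).length + 1) h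
    (by rw [List.take_add_one, List.take_add_one, take_length_commonPrefix, he])
  omega

theorem min_length_commonPrefix_le (A B C : YFWord) :
    min (commonPrefix A B).length (commonPrefix B C).length ≤ (commonPrefix A C).length := by
  refine le_length_commonPrefix ((min_le_left _ _).trans (length_commonPrefix_le_left A B)) ?_
  exact (take_eq_take_of_le_length_commonPrefix (min_le_left _ _)).trans
    (take_eq_take_of_le_length_commonPrefix (min_le_right _ _))

theorem twos_drop_le (l : YFWord) (n : ℕ) : twos (l.drop n) ≤ l.length - n :=
  List.length_drop (l := l) ▸ List.count_le_length

theorem twos_drop_eq_add {m n : ℕ} (l : YFWord) (h : m ≤ n) :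
    twos (l.drop m) = twos ((l.take n).drop m) + twos (l.drop n) := by
  simp only [twos]
  conv_lhs => rw [← List.take_append_drop (n - m) (l.drop m)]
  rw [List.count_append, List.drop_drop, List.drop_take, Nat.add_sub_cancel' h]

theorem twos_drop_le_add {m n : ℕ} (l : YFWord) (h : m ≤ n) :
    twos (l.drop m) ≤ n - m + twos (l.drop n) := by
  have := twos_drop_le (l.take n) m
  rw [twos_drop_eq_add l h, List.length_take] at *
  omega

theorem getElem?_eq_two_of_twos_drop {l : YFWord} {n : ℕ} (h : l.length - n ≤ twos (l.drop n))
    (hn : n < l.length) : l[n]? = some .two := by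
  have hall := List.count_eq_length.mp
    (le_antisymm List.count_le_length (List.length_drop (l := l) ▸ h))
  have hpos : 0 < (l.drop n).length := by simp only [List.length_drop]; omega
  rw [← Nat.add_zero n, ← List.getElem?_drop, List.getElem?_eq_getElem hpos,
    ← hall _ (List.getElem_mem hpos)]

/-- The Young–Fibonacci order on reversed words. -/
def RevLE (X Y : YFWord) : Prop :=
  X.length - (commonPrefix X Y).length ≤ twos (Y.drop (commonPrefix X Y).length)

theorem yfLE_iff_revLE (x y : YFWord) : yfLE x y ↔ RevLE x.reverse y.reverse := by
  have hy := length_commonPrefix_le_right x.reverse y.reverse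
  rw [List.length_reverse] at hy
  rw [yfLE, RevLE, rem, rem, lcs, lcs, commonPrefix_comm y.reverse, twos, ← List.count_reverse,
    List.reverse_take, List.length_take, List.length_reverse, Nat.sub_sub_self hy]
  simp only [List.length_reverse, twos, min_eq_left (Nat.sub_le _ _)]

theorem revLE_refl (X : YFWord) : RevLE X X := by
  simp [RevLE, commonPrefix_self]

theorem revLE_antisymm {X Y : YFWord} (hXY : RevLE X Y) (hYX : RevLE Y X) : X = Y := by
  rw [RevLE, commonPrefix_comm Y] at *
  have hX := twos_drop_le X (commonPrefix X Y).length
  have hY := twos_drop_le Y (commonPrefix X Y).length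
  have hcX := length_commonPrefix_le_left X Y
  have hcY := length_commonPrefix_le_right X Y
  obtain hc | hc := hcX.lt_or_eq
  · have hXc := getElem?_eq_two_of_twos_drop (l := X) (by omega) hc
    have hYc : Y[(commonPrefix X Y).length]? = some .two :=
      getElem?_eq_two_of_twos_drop (by omega) (by omega)
    exact absurd (hXc.trans hYc.symm) (getElem?_length_commonPrefix_ne hc)
  · rw [← List.take_length (l := X), ← List.take_length (l := Y), ← hc,
      show Y.length = (commonPrefix X Y).length by omega, take_length_commonPrefix]

theorem revLE_trans {X Y Z : YFWord} (hXY : RevLE X Y) (hYZ : RevLE Y Z) : RevLE X Z := by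
  rw [RevLE] at *
  have hmin := min_length_commonPrefix_le X Y Z
  have hXZ_min : X.length - min (commonPrefix X Y).length (commonPrefix Y Z).length ≤
      twos (Z.drop (min (commonPrefix X Y).length (commonPrefix Y Z).length)) := by
    obtain hab | hba := le_total (commonPrefix X Y).length (commonPrefix Y Z).length
    · have hY := twos_drop_eq_add Y hab
      have hZ := twos_drop_eq_add Z hab
      rw [take_length_commonPrefix] at hY
      have hYb := twos_drop_le Y (commonPrefix Y Z).length
      rw [min_eq_left hab]
      omega
    · have hYa := twos_drop_le Y (commonPrefix X Y).length
      have haY := length_commonPrefix_le_right X Y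
      rw [min_eq_right hba]
      omega
  have hZ := twos_drop_le_add Z hmin
  omega

end YFWord

open YFWord

theorem yf_partial_order :
    (∀ x : YFWord, yfLE x x) ∧
    (∀ x y : YFWord, yfLE x y → yfLE y x → x = y) ∧
    (∀ x y z : YFWord, yfLE x y → yfLE y z → yfLE x z) := by
  simp only [yfLE_iff_revLE]
  exact ⟨fun x => revLE_refl _,
    fun x y hxy hyx => List.reverse_injective (revLE_antisymm hxy hyx),
    fun x y z hxy hyz => revLE_trans hxy hyz⟩
end

section
/- In the Young–Fibonacci graph, every vertex of rank n (digit sum n) has out-degree (number of covers of it) exceeding its in-degree (number of elements it covers) by exactly 1. -/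
open YFWord

/-!
Cancelling the longest common suffix reduces `x ≤ y` to words `A`, `B` with different last
letters, where it reads `|A| ≤ twos B`; this gives `dsum x ≤ dsum y`, with equality only for
`x = y`. Every nonempty such `B` has a lower neighbour, of rank one less, that is still above `A`.
Hence the covers are exactly the comparable pairs of rank difference one, and these are exactly
the two moves: insert a `1` into the leading block of `2`s, or turn the leftmost `1` into a `2`.
Writing `u = 2^a r` with `r` empty or starting with `1`, `u` has `a + 1` upper covers by insertion
and `a` lower covers by replacement, plus one cover in each direction through the leftmost `1` of
`u` when `r ≠ []`.
-/

namespace List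

theorem le_and_eq_replicate_append_of_replicate_append_eq {α : Type*} {d : α} {p a : ℕ}
    {C D : List α} (hD : D.head? ≠ some d) (h : replicate p d ++ C = replicate a d ++ D) :
    p ≤ a ∧ C = replicate (a - p) d ++ D := by
  induction p generalizing a with
  | zero => simpa using h
  | succ p ih =>
    cases a with
    | zero =>
      rw [replicate_zero, nil_append] at h
      simp [← h, replicate_succ] at hD
    | succ a =>
      simp only [replicate_succ, cons_append, cons.injEq, true_and] at h
      obtain ⟨hpa, rfl⟩ := ih h
      exact ⟨by omega, by simp⟩

end List

namespace YFWord

open List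

@[simp] lemma dsum_nil : dsum [] = 0 := rfl

@[simp] lemma dsum_cons (d : YFDigit) (v : YFWord) : dsum (d :: v) = digitVal d + dsum v := by
  simp [dsum]

@[simp] lemma dsum_append (v w : YFWord) : dsum (v ++ w) = dsum v + dsum w := by
  simp [dsum]

@[simp] lemma twos_nil : twos [] = 0 := rfl

@[simp] lemma twos_cons_one (v : YFWord) : twos (.one :: v) = twos v := by
  simp [twos]

@[simp] lemma twos_cons_two (v : YFWord) : twos (.two :: v) = twos v + 1 := by
  simp [twos]

@[simp] lemma twos_append (v w : YFWord) : twos (v ++ w) = twos v + twos w :=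
  count_append ..

@[simp] lemma twos_replicate (p : ℕ) : twos (replicate p .two) = p := by
  simp [twos]

@[simp] lemma dsum_replicate (p : ℕ) : dsum (replicate p .two) = 2 * p := by
  simp [dsum, digitVal, mul_comm]

lemma twos_le_length (v : YFWord) : twos v ≤ v.length :=
  count_le_length ..

lemma dsum_eq_length_add_twos (v : YFWord) : dsum v = v.length + twos v := by
  induction v with
  | nil => rfl
  | cons d v ih => cases d <;> simp [digitVal, ih] <;> omega

lemma eq_replicate_of_twos_eq_length {v : YFWord} (h : twos v = v.length) :
    v = replicate v.length .two :=
  eq_replicate_iff.2 ⟨rfl, fun b hb => (count_eq_length.1 h b hb).symm⟩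

lemma exists_eq_replicate_or_eq_replicate_append_one (u : YFWord) :
    ∃ a, u = replicate a .two ∨ ∃ v, u = replicate a .two ++ .one :: v := by
  induction u with
  | nil => exact ⟨0, .inl rfl⟩
  | cons d u ih =>
    cases d with
    | one => exact ⟨0, .inr ⟨u, rfl⟩⟩
    | two =>
      obtain ⟨a, rfl | ⟨v, rfl⟩⟩ := ih
      · exact ⟨a + 1, .inl rfl⟩
      · exact ⟨a + 1, .inr ⟨v, rfl⟩⟩

lemma exists_eq_append_one {A : YFWord} (hA : A ≠ []) (hlast : A.getLast? ≠ some .two) :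
    ∃ A', A = A' ++ [.one] := by
  obtain rfl | ⟨A', d, rfl⟩ := eq_nil_or_concat A
  · exact absurd rfl hA
  · cases d with
    | one => exact ⟨A', by simp⟩
    | two => simp at hlast

@[simp] lemma commonPrefix_nil_left (b : YFWord) : commonPrefix [] b = [] := by
  cases b <;> rfl

@[simp] lemma commonPrefix_nil_right (a : YFWord) : commonPrefix a [] = [] := by
  cases a <;> rfl

lemma commonPrefix_cons_cons (a b : YFDigit) (x y : YFWord) :
    commonPrefix (a :: x) (b :: y) = if a = b then a :: commonPrefix x y else [] := rfl

lemma commonPrefix_comm_s4 (x y : YFWord) : commonPrefix x y = commonPrefix y x := by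
  induction x generalizing y with
  | nil => simp
  | cons a x ih =>
    cases y with
    | nil => simp
    | cons b y =>
      by_cases h : a = b
      · subst h; simp [commonPrefix_cons_cons, ih]
      · simp [commonPrefix_cons_cons, h, Ne.symm h]

lemma commonPrefix_prefix (x y : YFWord) : commonPrefix x y <+: x := by
  induction x generalizing y with
  | nil => simp
  | cons a x ih =>
    cases y with
    | nil => simp
    | cons b y =>
      rw [commonPrefix_cons_cons]
      split_ifs
      · exact cons_prefix_cons.2 ⟨rfl, ih y⟩
      · exact nil_prefix

lemma commonPrefix_append_append (c x y : YFWord) :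
    commonPrefix (c ++ x) (c ++ y) = c ++ commonPrefix x y := by
  induction c with
  | nil => rfl
  | cons a c ih => simp [commonPrefix_cons_cons, ih]

lemma commonPrefix_eq_nil_iff {x y : YFWord} :
    commonPrefix x y = [] ↔ x = [] ∨ x.head? ≠ y.head? := by
  cases x with
  | nil => simp
  | cons a x =>
    cases y with
    | nil => simp
    | cons b y => by_cases h : a = b <;> simp [commonPrefix_cons_cons, h]

lemma lcs_comm (x y : YFWord) : lcs x y = lcs y x := by
  rw [lcs, lcs, commonPrefix_comm_s4]

lemma lcs_suffix (x y : YFWord) : lcs x y <:+ x := by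
  simpa [lcs] using reverse_prefix.1 (by simpa using commonPrefix_prefix x.reverse y.reverse)

lemma lcs_append_append (A B C : YFWord) : lcs (A ++ C) (B ++ C) = lcs A B ++ C := by
  simp [lcs, commonPrefix_append_append]

lemma lcs_eq_nil_iff {x y : YFWord} : lcs x y = [] ↔ x = [] ∨ x.getLast? ≠ y.getLast? := by
  simp [lcs, commonPrefix_eq_nil_iff]

lemma rem_append_lcs (x y : YFWord) : rem x y ++ lcs x y = x :=
  suffix_iff_eq_append.1 (lcs_suffix x y)

lemma rem_append_append {A B : YFWord} (h : lcs A B = []) (C : YFWord) :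
    rem (A ++ C) (B ++ C) = A := by
  simp [rem, lcs_append_append, h]

lemma exists_lcs_eq_nil_append (x y : YFWord) :
    ∃ A B C, lcs A B = [] ∧ x = A ++ C ∧ y = B ++ C := by
  have hx := rem_append_lcs x y
  have hy : rem y x ++ lcs x y = y := by rw [lcs_comm, rem_append_lcs]
  refine ⟨rem x y, rem y x, lcs x y, ?_, hx.symm, hy.symm⟩
  have h := lcs_append_append (rem x y) (rem y x) (lcs x y)
  rw [hx, hy] at h
  simpa using congrArg length h

lemma yfLE_append_append_iff {A B : YFWord} (h : lcs A B = []) (C : YFWord) :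
    yfLE (A ++ C) (B ++ C) ↔ A.length ≤ twos B := by
  rw [yfLE, rem_append_append h, rem_append_append (by rwa [lcs_comm])]

lemma yfLE_append_right_iff (x y C : YFWord) : yfLE (x ++ C) (y ++ C) ↔ yfLE x y := by
  obtain ⟨A, B, D, hAB, rfl, rfl⟩ := exists_lcs_eq_nil_append x y
  rw [append_assoc, append_assoc, yfLE_append_append_iff hAB, yfLE_append_append_iff hAB]

lemma yfLE_of_length_le_twos {x y : YFWord} (h : x.length ≤ twos y) : yfLE x y := by
  obtain ⟨A, B, C, hAB, rfl, rfl⟩ := exists_lcs_eq_nil_append x y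
  rw [yfLE_append_append_iff hAB]
  simp only [length_append, twos_append] at h
  have := twos_le_length C
  omega

lemma yfLE_refl (x : YFWord) : yfLE x x := by
  obtain ⟨A, B, C, hAB, hA, hB⟩ := exists_lcs_eq_nil_append x x
  obtain rfl : A = B := append_cancel_right (hA.symm.trans hB)
  obtain rfl : A = [] := by simpa using lcs_eq_nil_iff.1 hAB
  rw [hA, yfLE_append_append_iff hAB]
  simp

lemma dsum_le_of_yfLE {x y : YFWord} (h : yfLE x y) : dsum x ≤ dsum y := by
  obtain ⟨A, B, C, hAB, rfl, rfl⟩ := exists_lcs_eq_nil_append x y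
  rw [yfLE_append_append_iff hAB] at h
  simp only [dsum_append, dsum_eq_length_add_twos A, dsum_eq_length_add_twos B]
  have := twos_le_length A
  have := twos_le_length B
  omega

/-- Equality in `dsum_le_of_yfLE` forces both remainders to be the same word `2 ⋯ 2`. -/
lemma dsum_lt_of_yfLE_of_ne {x y : YFWord} (h : yfLE x y) (hne : x ≠ y) : dsum x < dsum y := by
  obtain ⟨A, B, C, hAB, rfl, rfl⟩ := exists_lcs_eq_nil_append x y
  rw [yfLE_append_append_iff hAB] at h
  simp only [dsum_append, dsum_eq_length_add_twos A, dsum_eq_length_add_twos B]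
  by_contra hge
  have := twos_le_length A
  have := twos_le_length B
  have hA : twos A = A.length := by omega
  have hB : twos B = B.length := by omega
  have hlen : A.length = B.length := by omega
  rw [eq_replicate_of_twos_eq_length hA, eq_replicate_of_twos_eq_length hB, hlen] at hne
  exact hne rfl

lemma dsum_lt_of_yfLT {x y : YFWord} (h : yfLT x y) : dsum x < dsum y :=
  dsum_lt_of_yfLE_of_ne h.1 (by rintro rfl; exact h.2 (yfLE_refl x))

lemma yfLT_of_yfLE_of_dsum_lt {x y : YFWord} (h : yfLE x y) (hd : dsum x < dsum y) :
    yfLT x y :=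
  ⟨h, fun h' => (dsum_le_of_yfLE h').not_gt hd⟩

lemma eq_replicate_append_one {W : YFWord} (hlast : W.getLast? ≠ some .two)
    (h : twos W + 1 = W.length) : W = replicate (twos W) .two ++ [.one] := by
  obtain ⟨W', rfl⟩ := exists_eq_append_one (ne_nil_of_length_pos (by omega)) hlast
  have hW' : twos W' = W'.length := by simpa using h
  nth_rw 1 [eq_replicate_of_twos_eq_length hW']
  simp [hW']

/-- The covers of the Young–Fibonacci graph: insert a `1` into the leading block of `2`s, or
turn the leftmost `1` into a `2`. -/
def IsCoverStep (x y : YFWord) : Prop :=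
  (∃ p C, x = replicate p .two ++ C ∧ y = replicate p .two ++ .one :: C) ∨
    (∃ p C, x = replicate p .two ++ .one :: C ∧ y = replicate (p + 1) .two ++ C)

lemma IsCoverStep.yfLE {x y : YFWord} (h : IsCoverStep x y) : yfLE x y := by
  rcases h with ⟨p, C, rfl, rfl⟩ | ⟨p, C, rfl, rfl⟩
  · rw [← singleton_append, ← append_assoc, yfLE_append_append_iff]
    · simp
    · rw [lcs_eq_nil_iff, getLast?_replicate]
      split_ifs <;> simp
  · rw [← singleton_append, ← append_assoc, yfLE_append_append_iff]
    · simp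
    · simp [lcs_eq_nil_iff, getLast?_replicate]

lemma IsCoverStep.dsum_eq {x y : YFWord} (h : IsCoverStep x y) : dsum y = dsum x + 1 := by
  rcases h with ⟨p, C, rfl, rfl⟩ | ⟨p, C, rfl, rfl⟩ <;> simp [digitVal] <;> omega

lemma IsCoverStep.append_right {x y : YFWord} (h : IsCoverStep x y) (D : YFWord) :
    IsCoverStep (x ++ D) (y ++ D) := by
  rcases h with ⟨p, C, rfl, rfl⟩ | ⟨p, C, rfl, rfl⟩
  · exact .inl ⟨p, C ++ D, by simp, by simp⟩
  · exact .inr ⟨p, C ++ D, by simp, by simp⟩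

lemma isCoverStep_of_lcs_eq_nil {A B : YFWord} (hAB : lcs A B = []) (h : A.length ≤ twos B)
    (hd : dsum B = dsum A + 1) : IsCoverStep A B := by
  have := twos_le_length A
  have := twos_le_length B
  rw [dsum_eq_length_add_twos, dsum_eq_length_add_twos] at hd
  by_cases hA : twos A = A.length
  -- the rank count leaves only `A = 2^p, B = 2^p 1` and `A = 2^p 1, B = 2^(p+1)`
  · have hlast : B.getLast? ≠ some .two := by
      intro hlast
      obtain ⟨B', rfl⟩ := getLast?_eq_some_iff.1 hlast
      have hApos : 0 < A.length := by simp at hd; omega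
      have hAB' := (lcs_eq_nil_iff.1 hAB).resolve_left (ne_nil_of_length_pos hApos)
      rw [eq_replicate_of_twos_eq_length hA, getLast?_replicate, if_neg (by omega), hlast]
        at hAB'
      exact hAB' rfl
    refine .inl ⟨A.length, [], by simpa using eq_replicate_of_twos_eq_length hA, ?_⟩
    rw [eq_replicate_append_one hlast (by omega)]
    congr 2
    omega
  · have hB : B = replicate B.length .two := eq_replicate_of_twos_eq_length (by omega)
    have hlast : A.getLast? ≠ some .two := by
      have hAB' := (lcs_eq_nil_iff.1 hAB).resolve_left (ne_nil_of_length_pos (by omega))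
      rwa [hB, getLast?_replicate, if_neg (by omega)] at hAB'
    refine .inr ⟨twos A, [], by simpa using eq_replicate_append_one hlast (by omega), ?_⟩
    rw [hB, append_nil]
    congr 1
    omega

lemma exists_isCoverStep_yfLE {A B : YFWord} (hAB : lcs A B = []) (h : A.length ≤ twos B)
    (hB : B ≠ []) : ∃ Z, IsCoverStep Z B ∧ yfLE A Z := by
  obtain ⟨k, rfl | ⟨Q, rfl⟩⟩ := exists_eq_replicate_or_eq_replicate_append_one B
  · obtain ⟨m, rfl⟩ : ∃ m, k = m + 1 :=
      Nat.exists_eq_add_one.2 (by simpa [pos_iff_ne_zero] using hB)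
    refine ⟨replicate m .two ++ [.one], .inr ⟨m, [], rfl, by simp⟩, ?_⟩
    rw [twos_replicate] at h
    rcases Nat.lt_or_ge A.length (m + 1) with hlt | hge
    · exact yfLE_of_length_le_twos (by simp; omega)
    · have hAne : A ≠ [] := ne_nil_of_length_pos (by omega)
      have hlast : A.getLast? ≠ some .two := by
        simpa [getLast?_replicate] using (lcs_eq_nil_iff.1 hAB).resolve_left hAne
      obtain ⟨A', rfl⟩ := exists_eq_append_one hAne hlast
      rw [yfLE_append_right_iff]
      exact yfLE_of_length_le_twos (by simp at hge h ⊢; omega)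
  · exact ⟨replicate k .two ++ Q, .inl ⟨k, Q, rfl, rfl⟩,
      yfLE_of_length_le_twos (by simpa using h)⟩

lemma exists_yfLT_yfLT_of_yfLE {x y : YFWord} (h : yfLE x y) (hd : dsum x + 2 ≤ dsum y) :
    ∃ z, yfLT x z ∧ yfLT z y := by
  obtain ⟨A, B, C, hAB, rfl, rfl⟩ := exists_lcs_eq_nil_append x y
  simp only [dsum_append] at hd
  obtain ⟨Z, hZB, hAZ⟩ := exists_isCoverStep_yfLE hAB ((yfLE_append_append_iff hAB C).1 h)
    (by rintro rfl; simp at hd; omega)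
  have hZ := hZB.dsum_eq
  refine ⟨Z ++ C, yfLT_of_yfLE_of_dsum_lt ((yfLE_append_right_iff A Z C).2 hAZ) ?_,
    yfLT_of_yfLE_of_dsum_lt (hZB.append_right C).yfLE ?_⟩ <;> simp <;> omega

lemma covers_iff_yfLE_and_dsum_eq {x y : YFWord} :
    covers x y ↔ yfLE x y ∧ dsum y = dsum x + 1 := by
  constructor
  · rintro ⟨hxy, hmid⟩
    refine ⟨hxy.1, ?_⟩
    by_contra hd
    have := dsum_lt_of_yfLT hxy
    exact hmid _ (exists_yfLT_yfLT_of_yfLE hxy.1 (by omega)).choose_spec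
  · rintro ⟨h, hd⟩
    refine ⟨yfLT_of_yfLE_of_dsum_lt h (by omega), fun z ⟨hxz, hzy⟩ => ?_⟩
    have := dsum_lt_of_yfLT hxz
    have := dsum_lt_of_yfLT hzy
    omega

lemma isCoverStep_of_yfLE {x y : YFWord} (h : yfLE x y) (hd : dsum y = dsum x + 1) :
    IsCoverStep x y := by
  obtain ⟨A, B, C, hAB, rfl, rfl⟩ := exists_lcs_eq_nil_append x y
  simp only [dsum_append] at hd
  exact (isCoverStep_of_lcs_eq_nil hAB ((yfLE_append_append_iff hAB C).1 h)
    (by omega)).append_right C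

lemma covers_iff_isCoverStep {x y : YFWord} : covers x y ↔ IsCoverStep x y := by
  rw [covers_iff_yfLE_and_dsum_eq]
  exact ⟨fun ⟨h, hd⟩ => isCoverStep_of_yfLE h hd, fun h => ⟨h.yfLE, h.dsum_eq⟩⟩

lemma replicate_append_one_inj {p a : ℕ} {C v : YFWord}
    (h : replicate p .two ++ .one :: C = replicate a .two ++ .one :: v) : p = a ∧ C = v := by
  obtain rfl : p = a := le_antisymm
    (le_and_eq_replicate_append_of_replicate_append_eq (by simp) h).1
    (le_and_eq_replicate_append_of_replicate_append_eq (by simp) h.symm).1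
  simpa using h

lemma setOf_isCoverStep_replicate (a : ℕ) :
    {y | IsCoverStep (replicate a .two) y} =
      (fun i => replicate i .two ++ .one :: replicate (a - i) .two) '' Set.Iic a := by
  ext y
  constructor
  · rintro (⟨p, C, h, rfl⟩ | ⟨p, C, h, -⟩)
    · obtain ⟨hp, rfl⟩ := le_and_eq_replicate_append_of_replicate_append_eq (D := [])
        (by simp) (by simpa using h.symm)
      exact ⟨p, hp, by simp⟩
    · simpa using congrArg (YFDigit.one ∈ ·) h
  · rintro ⟨i, hi, rfl⟩
    exact .inl ⟨i, _, by rw [← replicate_add, Nat.add_sub_cancel' hi], rfl⟩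

lemma setOf_isCoverStep_to_replicate (a : ℕ) :
    {w | IsCoverStep w (replicate a .two)} =
      (fun i => replicate i .two ++ .one :: replicate (a - (i + 1)) .two) '' Set.Iio a := by
  ext w
  constructor
  · rintro (⟨p, C, -, h⟩ | ⟨p, C, rfl, h⟩)
    · simpa using congrArg (YFDigit.one ∈ ·) h
    · obtain ⟨hp, rfl⟩ := le_and_eq_replicate_append_of_replicate_append_eq (D := [])
        (by simp) (by simpa using h.symm)
      exact ⟨p, hp, by simp⟩
  · rintro ⟨i, hi, rfl⟩
    exact .inr ⟨i, _, rfl, by rw [← replicate_add, Nat.add_sub_cancel' hi]⟩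

lemma setOf_isCoverStep_replicate_append_one (a : ℕ) (v : YFWord) :
    {y | IsCoverStep (replicate a .two ++ .one :: v) y} =
      insert (replicate (a + 1) .two ++ v)
        ((fun i => replicate i .two ++ .one :: (replicate (a - i) .two ++ .one :: v)) ''
          Set.Iic a) := by
  ext y
  constructor
  · rintro (⟨p, C, h, rfl⟩ | ⟨p, C, h, rfl⟩)
    · obtain ⟨hp, rfl⟩ := le_and_eq_replicate_append_of_replicate_append_eq (by simp) h.symm
      exact .inr ⟨p, hp, rfl⟩
    · obtain ⟨rfl, rfl⟩ := replicate_append_one_inj h.symm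
      exact .inl rfl
  · rintro (rfl | ⟨i, hi, rfl⟩)
    · exact .inr ⟨a, v, rfl, rfl⟩
    · refine .inl ⟨i, _, ?_, rfl⟩
      rw [← append_assoc, ← replicate_add, Nat.add_sub_cancel' hi]

lemma setOf_isCoverStep_to_replicate_append_one (a : ℕ) (v : YFWord) :
    {w | IsCoverStep w (replicate a .two ++ .one :: v)} =
      insert (replicate a .two ++ v)
        ((fun i => replicate i .two ++ .one :: (replicate (a - (i + 1)) .two ++ .one :: v)) ''
          Set.Iio a) := by
  ext w
  constructor
  · rintro (⟨p, C, rfl, h⟩ | ⟨p, C, rfl, h⟩)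
    · obtain ⟨rfl, rfl⟩ := replicate_append_one_inj h.symm
      exact .inl rfl
    · obtain ⟨hp, rfl⟩ := le_and_eq_replicate_append_of_replicate_append_eq (by simp) h.symm
      exact .inr ⟨p, hp, rfl⟩
  · rintro (rfl | ⟨i, hi, rfl⟩)
    · exact .inl ⟨a, v, rfl, rfl⟩
    · refine .inr ⟨i, _, rfl, ?_⟩
      rw [← append_assoc, ← replicate_add, Nat.add_sub_cancel' hi]

lemma injective_replicate_append_one (g : ℕ → YFWord) :
    Function.Injective fun i => replicate i .two ++ .one :: g i :=
  fun _ _ h => (replicate_append_one_inj h).1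

lemma replicate_append_notMem_image {a : ℕ} {s : Set ℕ} (hs : s ⊆ Set.Iio a)
    (g : ℕ → YFWord) (C : YFWord) :
    replicate a .two ++ C ∉ (fun i => replicate i .two ++ .one :: g i) '' s := by
  rintro ⟨i, hi, h⟩
  exact (hs hi).not_ge (le_and_eq_replicate_append_of_replicate_append_eq (by simp) h.symm).1

end YFWord

theorem yf_one_differential_general (u : YFWord) :
    {y : YFWord | covers u y}.ncard = {w : YFWord | covers w u}.ncard + 1 := by
  simp only [covers_iff_isCoverStep]
  obtain ⟨a, rfl | ⟨v, rfl⟩⟩ := exists_eq_replicate_or_eq_replicate_append_one u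
  · rw [setOf_isCoverStep_replicate, setOf_isCoverStep_to_replicate,
      Set.ncard_image_of_injective _ (injective_replicate_append_one _),
      Set.ncard_image_of_injective _ (injective_replicate_append_one _),
      Set.ncard_Iic_nat, Set.ncard_Iio_nat]
  · rw [setOf_isCoverStep_replicate_append_one, setOf_isCoverStep_to_replicate_append_one,
      Set.ncard_insert_of_notMem
        (replicate_append_notMem_image (Set.Iic_subset_Iio.2 a.lt_add_one) _ _)
        ((Set.finite_Iic a).image _),
      Set.ncard_insert_of_notMem (replicate_append_notMem_image subset_rfl _ _)
        ((Set.finite_Iio a).image _),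
      Set.ncard_image_of_injective _ (injective_replicate_append_one _),
      Set.ncard_image_of_injective _ (injective_replicate_append_one _),
      Set.ncard_Iic_nat, Set.ncard_Iio_nat]

theorem yf_one_differential (n : ℕ) (u : YFWord) (hu : dsum u = n) :
    {y : YFWord | covers u y}.ncard = {w : YFWord | covers w u}.ncard + 1 :=
  yf_one_differential_general u
end
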